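/- Let Ω = (0,∞) with Lebesgue measure μ. For every f ∈ (L¹+L^∞)∖R_μ there exists a Dunford–Schwartz operator T on L¹+L^∞ such that the ergodic averages a_n(μ_t(f)) = (1/n)Σ_{k=0}^{n-1}T^k(μ_·(f))(t) fail to converge for almost every t; in fact they fail to converge for all t in some interval (ε,1). -/

import Mathlib

open MeasureTheory Filter
open scoped ENNReal

/-- Lebesgue measure on `Ω = (0,∞)`. -/
noncomputable def lebOn : Measure ℝ := volume.restrict (Set.Ioi (0:ℝ))

/-- Non-increasing rearrangement. -/
noncomputable def rearr (μ : Measure ℝ) (f : ℝ → ℝ) (t : ℝ) : ℝ :=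
  sInf {l : ℝ | 0 < l ∧ μ {x | l < |f x|} ≤ ENNReal.ofReal t}

/-- Membership in `L¹ + L^∞`. -/
def MemL1pLinf (μ : Measure ℝ) (f : ℝ → ℝ) : Prop :=
  ∃ g h : ℝ → ℝ, f = g + h ∧ Integrable g μ ∧ MemLp h ⊤ μ

/-- A Dunford–Schwartz operator. -/
structure DS (μ : Measure ℝ) where
  toFun : (ℝ → ℝ) → (ℝ → ℝ)
  map_add : ∀ f g, toFun (f + g) = toFun f + toFun g
  map_smul : ∀ (c : ℝ) (f : ℝ → ℝ), toFun (c • f) = c • toFun f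
  l1_contraction : ∀ f, eLpNorm (toFun f) 1 μ ≤ eLpNorm f 1 μ
  linf_contraction : ∀ f, eLpNorm (toFun f) ⊤ μ ≤ eLpNorm f ⊤ μ

/-!
Since `f ∉ R_μ`, the non-increasing rearrangement `μ_t(f)` is bounded below by some `c > 0`, so
for `t ∈ (1/2, 1)` the values `G k = μ_{t+k}(f)` all lie in `[c, C]` with `C = μ_{1/2}(f)`.
Take `T g (t) = φ(t) g(t+1)` with `|φ| = 1`: a signed unit shift, which contracts every `L^p` norm
on `(0,∞)`. With `φ(t) = σ(⌊t⌋+1) σ(⌊t⌋)` (`factorialShiftWeight`) the product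
`φ(t) ⋯ φ(t+k-1)` telescopes to `σ(k)` for `t ∈ [0,1)`, so `T^k g (t) = σ(k) g(t+k)`.
Choosing `σ(k) = (-1)^i` (`factorialSign`) on the block `[(i+1)!, (i+2)!)`, each block is `i+1`
times longer than everything before it, hence `(-1)^i` times the ergodic average at time `(i+2)!`
is at least `c - (c + C)/(i+2)`: the averages oscillate between values near `c` and near `-c`.
-/

open Finset
open scoped Nat

def factorialBlock (k : ℕ) : ℕ := Nat.findGreatest (fun i => (i + 1)! ≤ k) k

lemma factorialBlock_eq {i k : ℕ} (h₁ : (i + 1)! ≤ k) (h₂ : k < (i + 2)!) :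
    factorialBlock k = i := by
  rw [factorialBlock, Nat.findGreatest_eq_iff]
  refine ⟨(Nat.self_le_factorial _).trans' (by omega) |>.trans h₁, fun _ => h₁,
    fun n hn _ hnk => ?_⟩
  have : (i + 2)! ≤ (n + 1)! := Nat.factorial_le (by omega)
  omega

noncomputable def factorialSign (k : ℕ) : ℝ := (-1) ^ factorialBlock k

lemma factorialSign_zero : factorialSign 0 = 1 := by
  simp [factorialSign, factorialBlock]

lemma factorialSign_mul_self (k : ℕ) : factorialSign k * factorialSign k = 1 := by
  simp [factorialSign, ← mul_pow]

lemma abs_factorialSign (k : ℕ) : |factorialSign k| = 1 := by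
  simp [factorialSign]

lemma factorialSign_of_mem_Ico {i k : ℕ} (hk : k ∈ Ico (i + 1)! (i + 2)!) :
    factorialSign k = (-1) ^ i := by
  rw [factorialSign, factorialBlock_eq (mem_Ico.1 hk).1 (mem_Ico.1 hk).2]

lemma sub_div_le_neg_one_pow_mul_average {G : ℕ → ℝ} {c C : ℝ} (hlb : ∀ k, c ≤ G k)
    (hub : ∀ k, |G k| ≤ C) (i : ℕ) :
    c - (c + C) / (i + 2) ≤
      (-1) ^ i * ((∑ k ∈ range (i + 2)!, factorialSign k * G k) / (i + 2)!) := by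
  set m := (i + 1)!
  have hm : (0 : ℝ) < m := mod_cast Nat.factorial_pos _
  have hmn : m ≤ (i + 2)! := Nat.factorial_le (by omega)
  have hn : ((i + 2)! : ℝ) = (i + 2) * m := by
    rw [Nat.factorial_succ (i + 1)]; push_cast; ring
  have head : ∀ k ∈ range m, -C ≤ (-1) ^ i * (factorialSign k * G k) := fun k _ => by
    refine neg_le_of_abs_le ?_
    rw [abs_mul, abs_mul, abs_pow, abs_neg, abs_one, one_pow, abs_factorialSign, one_mul, one_mul]
    exact hub k
  have block : ∀ k ∈ Ico m (i + 2)!, c ≤ (-1) ^ i * (factorialSign k * G k) := fun k hk => by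
    rw [factorialSign_of_mem_Ico hk, ← mul_assoc, ← mul_pow, neg_one_mul, neg_neg, one_pow,
      one_mul]
    exact hlb k
  have hsum : m * -C + ((i + 2)! - m) * c ≤
      (-1) ^ i * ∑ k ∈ range (i + 2)!, factorialSign k * G k := by
    rw [← sum_range_add_sum_Ico _ hmn, mul_add, mul_sum, mul_sum]
    have h₁ := card_nsmul_le_sum _ _ _ head
    have h₂ := card_nsmul_le_sum _ _ _ block
    rw [card_range, nsmul_eq_mul] at h₁
    rw [Nat.card_Ico, nsmul_eq_mul, Nat.cast_sub hmn] at h₂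
    exact add_le_add h₁ h₂
  rw [mul_div_assoc', le_div_iff₀ (by positivity), hn]
  rw [hn] at hsum
  have : (i : ℝ) + 2 ≠ 0 := by positivity
  calc (c - (c + C) / (i + 2)) * ((i + 2) * m) = m * -C + ((i + 2) * m - m) * c := by
        field_simp; ring
    _ ≤ _ := hsum

lemma not_tendsto_of_le_neg_one_pow_mul {x : ℕ → ℝ} {u : ℕ → ℕ} (hu : Tendsto u atTop atTop)
    {c : ℝ} (hc : 0 < c) (h : ∀ᶠ i in atTop, c ≤ (-1) ^ i * x (u i)) (L : ℝ) :
    ¬ Tendsto x atTop (nhds L) := by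
  intro hx
  have hxu := hx.comp hu
  have h2 : Tendsto (fun j : ℕ => 2 * j) atTop atTop := tendsto_id.const_mul_atTop' two_pos
  have h2' : Tendsto (fun j : ℕ => 2 * j + 1) atTop atTop := tendsto_add_atTop_nat 1 |>.comp h2
  have heven : c ≤ L := ge_of_tendsto (hxu.comp h2) <| (h2.eventually h).mono fun j hj => by
    simpa [pow_mul] using hj
  have hodd : c ≤ -L := ge_of_tendsto (hxu.comp h2').neg <| (h2'.eventually h).mono fun j hj => by
    simpa [pow_succ, pow_mul] using hj
  linarith

theorem not_tendsto_average_factorialSign_mul {G : ℕ → ℝ} {c C : ℝ} (hc : 0 < c)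
    (hlb : ∀ k, c ≤ G k) (hub : ∀ k, |G k| ≤ C) (L : ℝ) :
    ¬ Tendsto (fun n : ℕ => (∑ k ∈ range n, factorialSign k * G k) / n) atTop (nhds L) := by
  have hu : Tendsto (fun i => (i + 2)!) atTop atTop :=
    tendsto_atTop_mono (fun i => show i ≤ (i + 2)! from (Nat.self_le_factorial _).trans' (by omega))
      tendsto_id
  have hbound : Tendsto (fun i : ℕ => c - (c + C) / (i + 2)) atTop (nhds c) := by
    have hden : Tendsto (fun i : ℕ => (i : ℝ) + 2) atTop atTop :=
      tendsto_atTop_add_const_right _ 2 tendsto_natCast_atTop_atTop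
    simpa using tendsto_const_nhds.sub (tendsto_const_nhds (x := c + C) |>.div_atTop hden)
  refine not_tendsto_of_le_neg_one_pow_mul hu (half_pos hc) ?_ L
  filter_upwards [hbound.eventually_const_lt (half_lt_self hc)] with i hi
  exact hi.le.trans (sub_div_le_neg_one_pow_mul_average hlb hub i)

def weightedShift (w g : ℝ → ℝ) : ℝ → ℝ := fun t => w t * g (t + 1)

lemma weightedShift_iterate_apply (w g : ℝ → ℝ) (k : ℕ) (t : ℝ) :
    (weightedShift w)^[k] g t = (∏ j ∈ range k, w (t + j)) * g (t + k) := by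
  induction k generalizing t with
  | zero => simp
  | succ k ih =>
    rw [Function.iterate_succ_apply', weightedShift, ih, prod_range_succ']
    push_cast
    ring_nf

lemma eLpNorm_comp_add_one_le (g : ℝ → ℝ) (p : ℝ≥0∞) :
    eLpNorm (fun t => g (t + 1)) p lebOn ≤ eLpNorm g p lebOn := by
  have hemb : MeasurableEmbedding (fun x : ℝ => x + 1) :=
    (Homeomorph.addRight (1 : ℝ)).measurableEmbedding
  have hpres : MeasurePreserving (fun x : ℝ => x + 1) lebOn (volume.restrict (Set.Ioi 1)) := by
    have := (measurePreserving_add_right volume (1 : ℝ)).restrict_preimage_emb hemb (Set.Ioi 1)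
    rwa [show (fun x : ℝ => x + 1) ⁻¹' Set.Ioi 1 = Set.Ioi 0 by ext; simp] at this
  calc eLpNorm (g ∘ fun t => t + 1) p lebOn = eLpNorm g p (volume.restrict (Set.Ioi 1)) := by
        rw [← hemb.eLpNorm_map_measure, hpres.map_eq]
    _ ≤ eLpNorm g p lebOn :=
        eLpNorm_mono_measure _ (Measure.restrict_mono (Set.Ioi_subset_Ioi zero_le_one) le_rfl)

lemma eLpNorm_weightedShift_le {w : ℝ → ℝ} (hw : ∀ t, |w t| ≤ 1) (g : ℝ → ℝ) (p : ℝ≥0∞) :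
    eLpNorm (weightedShift w g) p lebOn ≤ eLpNorm g p lebOn := by
  refine (eLpNorm_mono fun t => ?_).trans (eLpNorm_comp_add_one_le g p)
  rw [weightedShift, norm_mul, Real.norm_eq_abs]
  exact mul_le_of_le_one_left (norm_nonneg _) (hw t)

noncomputable def weightedShiftDS {w : ℝ → ℝ} (hw : ∀ t, |w t| ≤ 1) : DS lebOn where
  toFun := weightedShift w
  map_add _ _ := funext fun _ => mul_add _ _ _
  map_smul _ _ := funext fun _ => mul_left_comm _ _ _
  l1_contraction := fun g => eLpNorm_weightedShift_le hw g 1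
  linf_contraction := fun g => eLpNorm_weightedShift_le hw g ⊤

noncomputable def factorialShiftWeight (t : ℝ) : ℝ := factorialSign (⌊t⌋₊ + 1) * factorialSign ⌊t⌋₊

lemma abs_factorialShiftWeight (t : ℝ) : |factorialShiftWeight t| ≤ 1 := by
  rw [factorialShiftWeight, abs_mul, abs_factorialSign, abs_factorialSign, one_mul]

lemma prod_factorialShiftWeight {t : ℝ} (ht : t ∈ Set.Ico (0 : ℝ) 1) (k : ℕ) :
    ∏ j ∈ range k, factorialShiftWeight (t + j) = factorialSign k := by
  induction k with
  | zero => simp [factorialSign_zero]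
  | succ k ih =>
    have hfloor : ⌊t + k⌋₊ = k := by
      rw [Nat.floor_eq_iff (by linarith [ht.1, k.cast_nonneg (α := ℝ)])]
      constructor <;> linarith [ht.1, ht.2]
    rw [prod_range_succ, ih, factorialShiftWeight, hfloor, mul_left_comm, factorialSign_mul_self,
      mul_one]

lemma weightedShift_factorialShiftWeight_iterate_apply (g : ℝ → ℝ) (k : ℕ) {t : ℝ}
    (ht : t ∈ Set.Ico (0 : ℝ) 1) :
    (weightedShift factorialShiftWeight)^[k] g t = factorialSign k * g (t + k) := by
  rw [weightedShift_iterate_apply, prod_factorialShiftWeight ht]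

lemma rearr_nonneg (μ : Measure ℝ) (f : ℝ → ℝ) (t : ℝ) : 0 ≤ rearr μ f t :=
  Real.sInf_nonneg fun _ hl => hl.1.le

section Rearrangement

variable {μ : Measure ℝ} {f : ℝ → ℝ}

lemma MeasureTheory.Integrable.exists_measure_le_abs_le {g : ℝ → ℝ} (hg : Integrable g μ) {t : ℝ}
    (ht : 0 < t) : ∃ a : ℝ, 0 < a ∧ μ {x | a ≤ |g x|} ≤ ENNReal.ofReal t := by
  set I := ∫⁻ x, ‖g x‖ₑ ∂μ
  have hI : I ≠ ⊤ := hg.2.ne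
  set a := I.toReal / t + 1
  have ha : 0 < a := by positivity
  refine ⟨a, ha, ?_⟩
  have hmarkov : μ {x | ENNReal.ofReal a ≤ ‖g x‖ₑ} ≤ I / ENNReal.ofReal a :=
    meas_ge_le_lintegral_div hg.aestronglyMeasurable.enorm (by simpa using ha) ENNReal.ofReal_ne_top
  have hset : {x | a ≤ |g x|} = {x | ENNReal.ofReal a ≤ ‖g x‖ₑ} := by
    ext x
    simp [Real.enorm_eq_ofReal_abs]
  rw [hset]
  refine hmarkov.trans (ENNReal.div_le_of_le_mul ?_)
  rw [← ENNReal.ofReal_mul ht.le, mul_add, mul_div_cancel₀ _ ht.ne', mul_one,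
    ENNReal.le_ofReal_iff_toReal_le hI (by positivity)]
  linarith

lemma MeasureTheory.MemLp.exists_ae_abs_le_of_top {h : ℝ → ℝ} (hh : MemLp h ⊤ μ) :
    ∃ M : ℝ, 0 ≤ M ∧ ∀ᵐ x ∂μ, |h x| ≤ M := by
  have hess : eLpNormEssSup h μ < ⊤ := by simpa using hh.eLpNorm_lt_top
  obtain ⟨M, hM⟩ := eLpNormEssSup_lt_top_iff_isBoundedUnder.1 hess
  exact ⟨M, M.2, (eventually_map.1 hM).mono fun x hx => by simpa using NNReal.coe_le_coe.2 hx⟩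

lemma MemL1pLinf.exists_measure_abs_gt_le (hf : MemL1pLinf μ f) {t : ℝ} (ht : 0 < t) :
    ∃ l : ℝ, 0 < l ∧ μ {x | l < |f x|} ≤ ENNReal.ofReal t := by
  obtain ⟨g, h, rfl, hg, hh⟩ := hf
  obtain ⟨a, ha, hga⟩ := hg.exists_measure_le_abs_le ht
  obtain ⟨M, hM, hhM⟩ := hh.exists_ae_abs_le_of_top
  refine ⟨M + a, by positivity, (measure_mono_ae ?_).trans hga⟩
  filter_upwards [hhM] with x hx (hlt : M + a < |g x + h x|)
  show a ≤ |g x|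
  linarith [abs_add_le (g x) (h x)]

lemma MemL1pLinf.rearr_antitoneOn (hf : MemL1pLinf μ f) :
    AntitoneOn (rearr μ f) (Set.Ioi 0) := fun _ hs _ _ hst =>
  csInf_le_csInf ⟨0, fun _ hl => hl.1.le⟩ (hf.exists_measure_abs_gt_le hs)
    fun _ hl => ⟨hl.1, hl.2.trans (ENNReal.ofReal_le_ofReal hst)⟩

lemma MemL1pLinf.exists_pos_le_rearr (hf : MemL1pLinf μ f)
    (hnot : ¬ Tendsto (rearr μ f) atTop (nhds 0)) :
    ∃ c : ℝ, 0 < c ∧ ∀ s : ℝ, 0 < s → c ≤ rearr μ f s := by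
  obtain ⟨c, hc, hfreq⟩ : ∃ c, 0 < c ∧ ∀ s, ∃ b, s ≤ b ∧ c ≤ |rearr μ f b| := by
    simpa [NormedAddGroup.tendsto_nhds_zero] using hnot
  refine ⟨c, hc, fun s hs => ?_⟩
  obtain ⟨b, hsb, hb⟩ := hfreq s
  rw [abs_of_nonneg (rearr_nonneg μ f b)] at hb
  exact hb.trans (hf.rearr_antitoneOn hs (hs.trans_le hsb) hsb)

end Rearrangement

/-- On `Ω = (0,∞)` with Lebesgue measure, for any `f ∈ (L¹+L^∞) ∖ R_μ` there is a
Dunford–Schwartz operator `T` whose ergodic averages applied to `μ_·(f)` do not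
converge a.e.; in fact they diverge at every point of some interval `(ε,1)`. -/
theorem stmt12 (f : ℝ → ℝ) (hf : MemL1pLinf lebOn f)
    (hnot : ¬ Tendsto (rearr lebOn f) atTop (nhds 0)) :
    ∃ T : DS lebOn,
      (¬ ∀ᵐ t ∂lebOn, ∃ L : ℝ, Tendsto
          (fun n : ℕ => (∑ k ∈ Finset.range n, (T.toFun^[k] (rearr lebOn f)) t) / (n : ℝ))
          atTop (nhds L)) ∧
      ∃ ε : ℝ, 0 < ε ∧ ε < 1 ∧ ∀ t ∈ Set.Ioo ε 1,
        ¬ ∃ L : ℝ, Tendsto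
          (fun n : ℕ => (∑ k ∈ Finset.range n, (T.toFun^[k] (rearr lebOn f)) t) / (n : ℝ))
          atTop (nhds L) := by
  obtain ⟨c, hc, hc_le⟩ := hf.exists_pos_le_rearr hnot
  let T := weightedShiftDS abs_factorialShiftWeight
  have hdiv : ∀ t ∈ Set.Ioo (1 / 2 : ℝ) 1, ¬ ∃ L : ℝ, Tendsto
      (fun n : ℕ => (∑ k ∈ range n, (T.toFun^[k] (rearr lebOn f)) t) / (n : ℝ)) atTop (nhds L) := by
    rintro t ⟨ht₀, ht₁⟩ ⟨L, hL⟩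
    have hle : ∀ k : ℕ, 1 / 2 ≤ t + k := fun k => by linarith [k.cast_nonneg (α := ℝ)]
    refine not_tendsto_average_factorialSign_mul (C := rearr lebOn f (1 / 2)) hc
      (fun k => hc_le _ ((hle k).trans_lt' one_half_pos)) (fun k => ?_) L ?_
    · rw [abs_of_nonneg (rearr_nonneg _ _ _)]
      exact hf.rearr_antitoneOn (by norm_num) ((hle k).trans_lt' one_half_pos) (hle k)
    · simpa only [T, weightedShiftDS,
        weightedShift_factorialShiftWeight_iterate_apply _ _ ⟨by linarith, ht₁⟩] using hL
  refine ⟨T, fun hae => ?_, 1 / 2, by norm_num, by norm_num, hdiv⟩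
  have hnull : lebOn (Set.Ioo (1 / 2 : ℝ) 1) = 0 := measure_mono_null hdiv (ae_iff.1 hae)
  rw [lebOn, Measure.restrict_apply measurableSet_Ioo,
    Set.inter_eq_left.2 (Set.Ioo_subset_Ioi_self.trans (Set.Ioi_subset_Ioi one_half_pos.le)),
    Real.volume_Ioo] at hnull
  norm_num at hnull
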